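/- In the lasso setting, assume λ ≥ (4/n) ‖X^⊤ e‖_∞, and assume the restricted eigenvalue condition: there exists κ > 0 such that (1/n)‖X v‖₂² ≥ κ ‖v‖₂² for every v ∈ ℝ^p with ‖v_{S₀^c}‖₁ ≤ 3‖v_{S₀}‖₁. Then any lasso minimizer θ̂ satisfies ‖θ̂ − θ*‖₂ ≤ 3 λ √(s₀) / (2κ), where s₀ = |S₀|. -/
import Mathlib


/-- the lasso ℓ₂ error bound `‖θ̂ − θ*‖₂ ≤ 3λ√s₀/(2κ)` under the
restricted eigenvalue condition and `λ ≥ (4/n)‖Xᵀe‖_∞`. -/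
theorem lasso_l2_error_bound
    (n p : ℕ) (hn : 0 < n)
    (X : Matrix (Fin n) (Fin p) ℝ) (θs : Fin p → ℝ) (e : Fin n → ℝ)
    (S₀ : Finset (Fin p)) (hS₀ : ∀ j, j ∈ S₀ ↔ θs j ≠ 0)
    (lam : ℝ) (hlam_pos : 0 < lam)
    (w : Fin n → ℝ) (hw : ∀ i, w i = (∑ j, X i j * θs j) + e i)
    (hlam : ∀ j, (4 / (n : ℝ)) * |∑ i, X i j * e i| ≤ lam)
    (κ : ℝ) (hκ : 0 < κ)
    (hRE : ∀ v : Fin p → ℝ,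
      (∑ j ∈ S₀ᶜ, |v j|) ≤ 3 * ∑ j ∈ S₀, |v j| →
        κ * ∑ j, (v j) ^ 2 ≤ (1 / (n : ℝ)) * ∑ i, (∑ j, X i j * v j) ^ 2)
    (θh : Fin p → ℝ)
    (hmin : ∀ θ : Fin p → ℝ,
      (1 / (n : ℝ)) * (∑ i, (w i - ∑ j, X i j * θh j) ^ 2) + lam * ∑ j, |θh j|
        ≤ (1 / (n : ℝ)) * (∑ i, (w i - ∑ j, X i j * θ j) ^ 2) + lam * ∑ j, |θ j|) :
    Real.sqrt (∑ j, (θh j - θs j) ^ 2) ≤ 3 * lam * Real.sqrt (S₀.card) / (2 * κ) := by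
  have hn' : (0:ℝ) < n := by exact_mod_cast hn
  set Δ : Fin p → ℝ := fun j => θh j - θs j with hΔdef
  set A : ℝ := ∑ j ∈ S₀, |Δ j| with hAdef
  set B : ℝ := ∑ j ∈ S₀ᶜ, |Δ j| with hBdef
  set Q : ℝ := (1/(n:ℝ)) * ∑ i, (∑ j, X i j * Δ j)^2 with hQdef
  set R : ℝ := ∑ j, (Δ j)^2 with hRdef
  have hA0 : 0 ≤ A := Finset.sum_nonneg fun j _ => abs_nonneg _
  have hB0 : 0 ≤ B := Finset.sum_nonneg fun j _ => abs_nonneg _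
  have hR0 : 0 ≤ R := Finset.sum_nonneg fun j _ => sq_nonneg _
  have hQ0 : 0 ≤ Q := mul_nonneg (by positivity) (Finset.sum_nonneg fun i _ => sq_nonneg _)
  -- residual identity
  have hres : ∀ i, w i - ∑ j, X i j * θh j = e i - ∑ j, X i j * Δ j := by
    intro i
    have h2 : ∑ j, X i j * Δ j = (∑ j, X i j * θh j) - ∑ j, X i j * θs j := by
      rw [← Finset.sum_sub_distrib]
      exact Finset.sum_congr rfl fun j _ => by simp only [hΔdef]; ring
    rw [hw i]; linarith
  -- basic inequality from minimality at θs
  have hbasic : Q ≤ (2/(n:ℝ)) * (∑ j, Δ j * (∑ i, X i j * e i))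
      + lam * ((∑ j, |θs j|) - ∑ j, |θh j|) := by
    have h := hmin θs
    have hws : ∀ i, w i - ∑ j, X i j * θs j = e i := fun i => by rw [hw i]; ring
    have hexp : ∑ i, (w i - ∑ j, X i j * θh j)^2
        = (∑ i, (e i)^2) - (2 * ∑ i, e i * (∑ j, X i j * Δ j))
          + ∑ i, (∑ j, X i j * Δ j)^2 := by
      rw [Finset.mul_sum, ← Finset.sum_sub_distrib, ← Finset.sum_add_distrib]
      exact Finset.sum_congr rfl fun i _ => by rw [hres i]; ring
    have hswap : ∑ i, e i * (∑ j, X i j * Δ j) = ∑ j, Δ j * (∑ i, X i j * e i) := by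
      simp_rw [Finset.mul_sum]
      rw [Finset.sum_comm]
      exact Finset.sum_congr rfl fun j _ => Finset.sum_congr rfl fun i _ => by ring
    simp only [hws] at h
    rw [hexp, hswap] at h
    have hid : (1/(n:ℝ)) * ((∑ i, (e i)^2) - (2 * ∑ j, Δ j * (∑ i, X i j * e i))
          + ∑ i, (∑ j, X i j * Δ j)^2)
        = (1/(n:ℝ)) * (∑ i, (e i)^2) - (2/(n:ℝ)) * (∑ j, Δ j * (∑ i, X i j * e i))
          + (1/(n:ℝ)) * ∑ i, (∑ j, X i j * Δ j)^2 := by ring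
    rw [hid] at h
    rw [hQdef]
    linarith
  -- bound cross term
  have hcross : ∑ j, Δ j * (∑ i, X i j * e i) ≤ ((n:ℝ) * lam / 4) * (A + B) := by
    have h1 : ∑ j, Δ j * (∑ i, X i j * e i) ≤ ∑ j, |Δ j| * ((n:ℝ) * lam / 4) := by
      apply Finset.sum_le_sum
      intro j _
      have h2 : Δ j * (∑ i, X i j * e i) ≤ |Δ j| * |∑ i, X i j * e i| :=
        (le_abs_self _).trans (le_of_eq (abs_mul _ _))
      have h3 : |∑ i, X i j * e i| ≤ (n:ℝ) * lam / 4 := by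
        have h4 := hlam j
        rw [div_mul_eq_mul_div, div_le_iff₀ hn'] at h4
        rw [le_div_iff₀ (by norm_num : (0:ℝ) < 4)]
        linarith
      exact h2.trans (mul_le_mul_of_nonneg_left h3 (abs_nonneg _))
    have h4 : ∑ j, |Δ j| * ((n:ℝ) * lam / 4) = ((n:ℝ) * lam / 4) * (A + B) := by
      rw [← Finset.sum_mul, ← Finset.sum_add_sum_compl S₀ (fun j => |Δ j|)]
      ring
    linarith [h4 ▸ h1]
  -- ℓ1 norm comparison
  have hl1 : (∑ j, |θs j|) - (∑ j, |θh j|) ≤ A - B := by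
    have hzero : ∀ j ∈ S₀ᶜ, θs j = 0 := by
      intro j hj
      by_contra hne
      exact (Finset.mem_compl.mp hj) ((hS₀ j).mpr hne)
    have hs : ∑ j, |θs j| = ∑ j ∈ S₀, |θs j| := by
      rw [← Finset.sum_add_sum_compl S₀ (fun j => |θs j|)]
      have hz : ∑ j ∈ S₀ᶜ, |θs j| = 0 :=
        Finset.sum_eq_zero fun j hj => by rw [hzero j hj, abs_zero]
      rw [hz, add_zero]
    have hh : ∑ j, |θh j| = (∑ j ∈ S₀, |θh j|) + B := by
      rw [← Finset.sum_add_sum_compl S₀ (fun j => |θh j|)]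
      congr 1
      exact Finset.sum_congr rfl fun j hj => by
        simp only [hΔdef, hzero j hj, sub_zero]
    have hS : ∑ j ∈ S₀, (|θs j| - |θh j|) ≤ A := by
      apply Finset.sum_le_sum
      intro j _
      calc |θs j| - |θh j| ≤ |θs j - θh j| := abs_sub_abs_le_abs_sub _ _
      _ = |Δ j| := by rw [← abs_neg]; congr 1; simp only [hΔdef]; ring
    rw [Finset.sum_sub_distrib] at hS
    rw [hs, hh]
    linarith
  -- combine: Q ≤ (3λ/2) A − (λ/2) B
  have hkey : Q ≤ 3 * lam / 2 * A - lam / 2 * B := by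
    have h1 : (2/(n:ℝ)) * (∑ j, Δ j * (∑ i, X i j * e i))
        ≤ (2/(n:ℝ)) * (((n:ℝ) * lam / 4) * (A + B)) :=
      mul_le_mul_of_nonneg_left hcross (by positivity)
    have h2 : (2/(n:ℝ)) * (((n:ℝ) * lam / 4) * (A + B)) = lam / 2 * (A + B) := by
      field_simp; ring
    have h3 : lam * ((∑ j, |θs j|) - ∑ j, |θh j|) ≤ lam * (A - B) :=
      mul_le_mul_of_nonneg_left hl1 hlam_pos.le
    linarith [hbasic, h1, h2, h3]
  -- cone condition
  have hcone : B ≤ 3 * A := by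
    have h1 : lam / 2 * B ≤ lam / 2 * (3 * A) := by linarith [hkey, hQ0]
    exact le_of_mul_le_mul_left h1 (by positivity)
  -- restricted eigenvalue
  have hre : κ * R ≤ Q := hRE Δ hcone
  -- Cauchy–Schwarz : A² ≤ s₀ R
  have hCS : A^2 ≤ (S₀.card : ℝ) * R := by
    have h1 : (∑ j ∈ S₀, 1 * |Δ j|)^2 ≤ (∑ j ∈ S₀, (1:ℝ)^2) * ∑ j ∈ S₀, |Δ j|^2 :=
      Finset.sum_mul_sq_le_sq_mul_sq S₀ _ _
    simp only [one_mul, one_pow, Finset.sum_const, nsmul_eq_mul, mul_one] at h1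
    have h2 : ∑ j ∈ S₀, |Δ j|^2 ≤ R := by
      have h3 : ∀ j ∈ S₀, |Δ j|^2 = Δ j ^ 2 := fun j _ => sq_abs _
      rw [Finset.sum_congr rfl h3]
      exact Finset.sum_le_sum_of_subset_of_nonneg (Finset.subset_univ _)
        (fun j _ _ => sq_nonneg _)
    calc A^2 ≤ (S₀.card : ℝ) * ∑ j ∈ S₀, |Δ j|^2 := h1
    _ ≤ (S₀.card : ℝ) * R := mul_le_mul_of_nonneg_left h2 (by positivity)
  -- finish
  set r := Real.sqrt R with hrdef
  have hr0 : 0 ≤ r := Real.sqrt_nonneg _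
  have hrsq : r^2 = R := Real.sq_sqrt hR0
  have hAle : A ≤ Real.sqrt (S₀.card) * r := by
    have h1 : A ≤ Real.sqrt ((S₀.card : ℝ) * R) := by
      rw [← Real.sqrt_sq hA0]
      exact Real.sqrt_le_sqrt hCS
    rwa [Real.sqrt_mul (by positivity)] at h1
  have hQ3 : Q ≤ 3 * lam / 2 * A := by
    have hlB : 0 ≤ lam / 2 * B := by positivity
    linarith [hkey]
  have h2 : 3 * lam / 2 * A ≤ 3 * lam / 2 * (Real.sqrt (S₀.card) * r) :=
    mul_le_mul_of_nonneg_left hAle (by positivity)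
  have hmain : κ * r^2 ≤ 3 * lam / 2 * (Real.sqrt (S₀.card) * r) := by
    rw [hrsq]; linarith
  rcases eq_or_lt_of_le hr0 with h | h
  · rw [← h]; positivity
  · rw [le_div_iff₀ (by positivity : (0:ℝ) < 2 * κ)]
    have h3 : (κ * r) * r ≤ (3 * lam / 2 * Real.sqrt (S₀.card)) * r := by
      linarith [hmain]
    have h4 : κ * r ≤ 3 * lam / 2 * Real.sqrt (S₀.card) :=
      le_of_mul_le_mul_right h3 h
    linarith [h4]
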